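/- Let A, S ∈ M_m(ℂ) and S_ε ∈ M_m(ℂ) with S self-adjoint, SA self-adjoint, and S_ε self-adjoint with λ·Id ≤ S_ε ≤ Λ·Id. Then for every u ∈ ℂ^m, |Re(−i·S_ε A u · u)| ≤ (1/λ)·‖S_ε − S‖·‖A‖·(S_ε u·u). -/

import Mathlib

noncomputable section
open Matrix MeasureTheory

attribute [local instance] Matrix.frobeniusNormedAddCommGroup Matrix.frobeniusNormedSpace

/-- Operator norm (ℓ²→ℓ²) of a complex matrix. -/
def opNorm {m : ℕ} (A : Matrix (Fin m) (Fin m) ℂ) : ℝ :=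
  ‖Matrix.toEuclideanCLM (𝕜 := ℂ) A‖

/-- Hermitian pairing `Su · v = ∑ (Su)_j conj(v_j)`. -/
def sip {m : ℕ} (S : Matrix (Fin m) (Fin m) ℂ) (u v : Fin m → ℂ) : ℂ :=
  S.mulVec u ⬝ᵥ star v

/-- Squared Euclidean norm of a complex vector. -/
def enormSq {m : ℕ} (u : Fin m → ℂ) : ℝ := ∑ i, ‖u i‖ ^ 2

/-- Euclidean norm of a complex vector. -/
def evnorm {m : ℕ} (u : Fin m → ℂ) : ℝ := Real.sqrt (enormSq u)

section

variable {m : ℕ}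

lemma sip_eq_inner (M : Matrix (Fin m) (Fin m) ℂ) (u v : Fin m → ℂ) :
    sip M u v = inner ℂ (WithLp.toLp 2 v) (toEuclideanCLM (𝕜 := ℂ) M (WithLp.toLp 2 u)) :=
  rfl

lemma norm_toLp_eq_evnorm (u : Fin m → ℂ) : ‖WithLp.toLp 2 u‖ = evnorm u := by
  rw [EuclideanSpace.norm_eq]
  rfl

lemma enormSq_nonneg (u : Fin m → ℂ) : 0 ≤ enormSq u :=
  Finset.sum_nonneg fun _ _ => by positivity

lemma evnorm_mul_self (u : Fin m → ℂ) : evnorm u * evnorm u = enormSq u :=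
  Real.mul_self_sqrt (enormSq_nonneg u)

lemma opNorm_nonneg (M : Matrix (Fin m) (Fin m) ℂ) : 0 ≤ opNorm M :=
  norm_nonneg _

lemma opNorm_mul_le (M N : Matrix (Fin m) (Fin m) ℂ) :
    opNorm (M * N) ≤ opNorm M * opNorm N := by
  rw [opNorm, opNorm, opNorm, _root_.map_mul]
  exact norm_mul_le _ _

lemma norm_sip_self_le (M : Matrix (Fin m) (Fin m) ℂ) (u : Fin m → ℂ) :
    ‖sip M u u‖ ≤ opNorm M * enormSq u := by
  set x := WithLp.toLp 2 u
  calc ‖sip M u u‖ ≤ ‖x‖ * ‖toEuclideanCLM (𝕜 := ℂ) M x‖ := by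
        rw [sip_eq_inner]
        exact norm_inner_le_norm _ _
    _ ≤ ‖x‖ * (opNorm M * ‖x‖) := by
        gcongr
        exact ContinuousLinearMap.le_opNorm _ _
    _ = opNorm M * enormSq u := by
        rw [norm_toLp_eq_evnorm, ← evnorm_mul_self]
        ring

lemma sip_add_left (M N : Matrix (Fin m) (Fin m) ℂ) (u v : Fin m → ℂ) :
    sip (M + N) u v = sip M u v + sip N u v := by
  simp only [sip, add_mulVec, add_dotProduct]

lemma im_sip_self_eq_zero {M : Matrix (Fin m) (Fin m) ℂ} (hM : M.IsHermitian)
    (u : Fin m → ℂ) : (sip M u u).im = 0 := by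
  rw [sip, dotProduct_comm]
  exact hM.im_star_dotProduct_mulVec_self u

/-- Splitting `T * A = (T - S) * A + S * A`, the self-adjoint part `S * A` contributes a real
pairing, which `-i` turns into a purely imaginary one. -/
lemma re_neg_I_mul_sip_mul_eq_im {S T A : Matrix (Fin m) (Fin m) ℂ} (hSA : (S * A).IsHermitian)
    (u : Fin m → ℂ) :
    (-Complex.I * sip (T * A) u u).re = (sip ((T - S) * A) u u).im := by
  rw [← sub_add_cancel T S, add_mul, sip_add_left, add_sub_cancel_right]
  simp [Complex.mul_re, im_sip_self_eq_zero hSA u]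

lemma abs_re_neg_I_mul_sip_mul_le {S T A : Matrix (Fin m) (Fin m) ℂ}
    (hSA : (S * A).IsHermitian) (u : Fin m → ℂ) :
    |(-Complex.I * sip (T * A) u u).re| ≤ opNorm (T - S) * opNorm A * enormSq u := by
  rw [re_neg_I_mul_sip_mul_eq_im hSA]
  calc |(sip ((T - S) * A) u u).im| ≤ ‖sip ((T - S) * A) u u‖ := Complex.abs_im_le_norm _
    _ ≤ opNorm ((T - S) * A) * enormSq u := norm_sip_self_le _ _
    _ ≤ opNorm (T - S) * opNorm A * enormSq u := by
        gcongr
        · exact enormSq_nonneg u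
        · exact opNorm_mul_le _ _

end

theorem stmt15_general {m : ℕ} (S Sε A : Matrix (Fin m) (Fin m) ℂ) (lam Lam : ℝ)
    (hlam : 0 < lam)
    (hSA : (S * A).IsHermitian)
    (hquad : ∀ w : Fin m → ℂ,
      lam * enormSq w ≤ (sip Sε w w).re ∧ (sip Sε w w).re ≤ Lam * enormSq w) :
    ∀ u : Fin m → ℂ,
      |((-Complex.I) * sip (Sε * A) u u).re| ≤
        (1 / lam) * opNorm (Sε - S) * opNorm A * (sip Sε u u).re := by
  intro u
  have hcoercive : enormSq u ≤ (1 / lam) * (sip Sε u u).re := by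
    rw [one_div_mul_eq_div, le_div_iff₀ hlam, mul_comm]
    exact (hquad u).1
  calc |((-Complex.I) * sip (Sε * A) u u).re|
      ≤ opNorm (Sε - S) * opNorm A * enormSq u := abs_re_neg_I_mul_sip_mul_le hSA u
    _ ≤ opNorm (Sε - S) * opNorm A * ((1 / lam) * (sip Sε u u).re) := by
        gcongr
        exact mul_nonneg (opNorm_nonneg _) (opNorm_nonneg _)
    _ = (1 / lam) * opNorm (Sε - S) * opNorm A * (sip Sε u u).re := by ring

theorem stmt15 {m : ℕ} (S Sε A : Matrix (Fin m) (Fin m) ℂ) (lam Lam : ℝ)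
    (hlam : 0 < lam) (hle : lam ≤ Lam)
    (hS : S.IsHermitian) (hSA : (S * A).IsHermitian) (hSε : Sε.IsHermitian)
    (hquad : ∀ w : Fin m → ℂ,
      lam * enormSq w ≤ (sip Sε w w).re ∧ (sip Sε w w).re ≤ Lam * enormSq w) :
    ∀ u : Fin m → ℂ,
      |((-Complex.I) * sip (Sε * A) u u).re| ≤
        (1 / lam) * opNorm (Sε - S) * opNorm A * (sip Sε u u).re :=
  stmt15_general S Sε A lam Lam hlam hSA hquad
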